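/- arXiv:2004.07962 — 3 statements merged into one kernel-verified Lean document; each statement's English description precedes it below -/
import Mathlib

section
/- Let k > 0, Dᵤ > 0, D_v > 0, c > 0 and r₃, r₄ be real numbers, and set A = −DᵤD_v/c and B = (Dᵤ − c²)/c. Then the polynomial identity k·u(u−1)·{A·[k²(2u−1)² + 2k²·u(u−1)] + B} = −u(u−1)(u−r₃)(u−r₄) holds for all real u if and only if c = 6k³DᵤD_v, r₃ + r₄ = 1, and r₃·r₄ = 1/6 − ρ, where ρ = k(Dᵤ − c²)/c. -/
/-!
Writing `k²(2u−1)² + 2k²u(u−1) = k²(6u² − 6u + 1)`, both sides are `u(u−1)` times a quadratic,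
and two such quartics agree everywhere iff the quadratics agree at `u = −1, 2, 3`, i.e. iff their
coefficients agree. With `t = k³DᵤD_v/c` the left quadratic is `−6t·u² + 6t·u + (ρ − t)`, so
matching it with `−u² + (r₃ + r₄)u − r₃r₄` forces `t = 1/6`, `r₃ + r₄ = 1` and `r₃r₄ = 1/6 − ρ`.
-/

theorem forall_mul_sub_one_mul_quadratic_eq_iff {a b d a' b' d' : ℝ} :
    (∀ u : ℝ, u * (u - 1) * (a * u ^ 2 + b * u + d) = u * (u - 1) * (a' * u ^ 2 + b' * u + d'))
      ↔ a = a' ∧ b = b' ∧ d = d' := by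
  constructor
  · intro h
    have hm := h (-1)
    have h2 := h 2
    have h3 := h 3
    norm_num at hm h2 h3
    refine ⟨?_, ?_, ?_⟩ <;> linarith
  · rintro ⟨rfl, rfl, rfl⟩ _
    rfl

theorem stmt_9_general (k Du Dv c r₃ r₄ : ℝ)
    (hc : 0 < c) :
    (∀ u : ℝ,
        k * u * (u - 1) *
          ((-(Du * Dv) / c) * (k ^ 2 * (2 * u - 1) ^ 2 + 2 * k ^ 2 * u * (u - 1))
            + (Du - c ^ 2) / c)
        = -(u * (u - 1) * (u - r₃) * (u - r₄)))
    ↔ (c = 6 * k ^ 3 * Du * Dv ∧ r₃ + r₄ = 1 ∧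
        r₃ * r₄ = 1 / 6 - k * (Du - c ^ 2) / c) := by
  set t := k ^ 3 * Du * Dv / c
  set ρ := k * (Du - c ^ 2) / c
  have hlhs (u : ℝ) : k * u * (u - 1) *
      ((-(Du * Dv) / c) * (k ^ 2 * (2 * u - 1) ^ 2 + 2 * k ^ 2 * u * (u - 1)) + (Du - c ^ 2) / c)
        = u * (u - 1) * (-6 * t * u ^ 2 + 6 * t * u + (ρ - t)) := by
    simp only [t, ρ]; ring
  have hrhs (u : ℝ) : -(u * (u - 1) * (u - r₃) * (u - r₄))
      = u * (u - 1) * (-1 * u ^ 2 + (r₃ + r₄) * u + -(r₃ * r₄)) := by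
    ring
  have ht : t = 1 / 6 ↔ c = 6 * k ^ 3 * Du * Dv := by
    rw [div_eq_iff hc.ne']
    constructor <;> intro h <;> linarith
  simp_rw [hlhs, hrhs, forall_mul_sub_one_mul_quadratic_eq_iff, ← ht]
  constructor <;> rintro ⟨h₁, h₂, h₃⟩ <;> refine ⟨?_, ?_, ?_⟩ <;> linarith

/-- With `A = −DᵤD_v/c`, `B = (Dᵤ − c²)/c`, the identity
`k·u(u−1)·{A·[k²(2u−1)² + 2k²·u(u−1)] + B} = −u(u−1)(u−r₃)(u−r₄)` holds for all
real `u` iff `c = 6k³DᵤD_v`, `r₃ + r₄ = 1` and `r₃·r₄ = 1/6 − ρ`,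
where `ρ = k(Dᵤ − c²)/c`. -/
theorem stmt_9 (k Du Dv c r₃ r₄ : ℝ)
    (hk : 0 < k) (hDu : 0 < Du) (hDv : 0 < Dv) (hc : 0 < c) :
    (∀ u : ℝ,
        k * u * (u - 1) *
          ((-(Du * Dv) / c) * (k ^ 2 * (2 * u - 1) ^ 2 + 2 * k ^ 2 * u * (u - 1))
            + (Du - c ^ 2) / c)
        = -(u * (u - 1) * (u - r₃) * (u - r₄)))
    ↔ (c = 6 * k ^ 3 * Du * Dv ∧ r₃ + r₄ = 1 ∧
        r₃ * r₄ = 1 / 6 - k * (Du - c ^ 2) / c) :=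
  stmt_9_general k Du Dv c r₃ r₄ hc
end

section
/- Let k > 0, Dᵤ > 0, D_v > 0, and v* ∈ ℝ. Set c = 6k³DᵤD_v, ρ = k(Dᵤ − c²)/c, and assume 3 + 36ρ ≥ 0; let r₃ = 1/2 − √(3 + 36ρ)/6 and r₄ = 1/2 + √(3 + 36ρ)/6. Define û(ξ) = e^{−kξ}/(1 + e^{−kξ}) and v̂(ξ) = v* + (Dᵤ/c)·û'(ξ), and define u(x,t) = û(x − ct), v(x,t) = v̂(x − ct). Then (u, v) is a classical solution of the reaction-cross-diffusion system ∂u/∂t = −u(u−1)(u−r₃)(u−r₄) + v* − v + D_v·∂²v/∂x², ∂v/∂t = −Dᵤ·∂²u/∂x² for all (x,t) ∈ ℝ². -/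
/-!
The profile `û(ξ) = σ(-kξ)` (with `σ` the logistic sigmoid) solves the logistic equation
`û' = k û (û - 1)`, so `û''` and `û'''` are polynomials in `û`. Along `ξ = x - ct` both equations
become polynomial identities in `û`: the second holds for any `c ≠ 0`, and in the first the
quartic terms cancel exactly when `c = 6k³DᵤD_v`, while `r₃, r₄` are the roots of
`w² - w + 1/6 - ρ`, which is what is left of the reaction term.
-/

open Real

lemma deriv_comp_const_sub_mul (f : ℝ → ℝ) (x c t : ℝ) :
    deriv (fun s => f (x - c * s)) t = -c * deriv f (x - c * t) := by
  have h := deriv_comp_mul_left c (fun r => f (x - r)) t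
  simp only [deriv_comp_const_sub, smul_eq_mul] at h
  rw [h]; ring

lemma deriv_deriv_comp_sub_const (f : ℝ → ℝ) (a x : ℝ) :
    deriv (deriv fun y => f (y - a)) x = deriv (deriv f) (x - a) := by
  have h : deriv (fun y => f (y - a)) = fun y => deriv f (y - a) :=
    funext fun y => deriv_comp_sub_const f a y
  rw [h, deriv_comp_sub_const]

lemma exp_neg_div_one_add_exp_neg (x : ℝ) : exp (-x) / (1 + exp (-x)) = sigmoid (-x) := by
  rw [← sigmoid_mul_rexp_neg, sigmoid_def, div_eq_inv_mul]

lemma hasDerivAt_sigmoid_neg_mul (k ξ : ℝ) :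
    HasDerivAt (fun ξ => sigmoid (-k * ξ)) (k * sigmoid (-k * ξ) * (sigmoid (-k * ξ) - 1)) ξ :=
  ((hasDerivAt_sigmoid _).comp ξ ((hasDerivAt_id' (x := ξ)).const_mul (-k))).congr_deriv (by ring)

section LogisticODE

variable {w : ℝ → ℝ} {k : ℝ} (hw : ∀ ξ, HasDerivAt w (k * w ξ * (w ξ - 1)) ξ)
include hw

lemma deriv_eq_of_logistic_ode : deriv w = fun ξ => k * w ξ * (w ξ - 1) :=
  funext fun ξ => (hw ξ).deriv

lemma deriv_deriv_eq_of_logistic_ode :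
    deriv (deriv w) = fun ξ => k ^ 2 * (2 * w ξ - 1) * w ξ * (w ξ - 1) := by
  rw [deriv_eq_of_logistic_ode hw]
  funext ξ
  rw [(((hw ξ).const_mul k).fun_mul ((hw ξ).sub_const 1)).deriv]
  ring

lemma deriv_deriv_deriv_eq_of_logistic_ode :
    deriv (deriv (deriv w)) =
      fun ξ => k ^ 3 * (6 * w ξ ^ 2 - 6 * w ξ + 1) * w ξ * (w ξ - 1) := by
  rw [deriv_deriv_eq_of_logistic_ode hw]
  funext ξ
  have hw2 := (hw ξ).const_mul 2 |>.sub_const 1 |>.const_mul (k ^ 2)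
  rw [((hw2.fun_mul (hw ξ)).fun_mul ((hw ξ).sub_const 1)).deriv]
  ring

end LogisticODE

lemma sub_mul_sub_eq_of_sqrt {ρ : ℝ} (h : 0 ≤ 3 + 36 * ρ) (w : ℝ) :
    (w - (1 / 2 - √(3 + 36 * ρ) / 6)) * (w - (1 / 2 + √(3 + 36 * ρ) / 6))
      = w ^ 2 - w + (1 / 6 - ρ) := by
  linear_combination (-1 / 36 : ℝ) * Real.sq_sqrt h

lemma front_reaction_balance {k Du Dv c ρ r₃ r₄ : ℝ} (hc0 : c ≠ 0)
    (hc : c = 6 * k ^ 3 * Du * Dv) (hρ : ρ = k * (Du - c ^ 2) / c) {w : ℝ}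
    (hroots : (w - r₃) * (w - r₄) = w ^ 2 - w + (1 / 6 - ρ)) :
    -c * (k * w * (w - 1)) = -w * (w - 1) * (w - r₃) * (w - r₄) - Du / c * (k * w * (w - 1))
      + Dv * (Du / c * (k ^ 3 * (6 * w ^ 2 - 6 * w + 1) * w * (w - 1))) := by
  have hρ' : ρ = k * Du / c - k * c := by rw [hρ]; field_simp
  have hc' : Dv * Du * k ^ 3 / c = 1 / 6 := by field_simp; linear_combination -hc
  linear_combination w * (w - 1) * hroots - w * (w - 1) * hρ'
    - (6 * w ^ 2 - 6 * w + 1) * w * (w - 1) * hc'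

/-- The travelling front `u(x,t) = û(x − ct)`, `v(x,t) = v̂(x − ct)`
with `û(ξ) = e^{−kξ}/(1 + e^{−kξ})`, `v̂ = v* + (Dᵤ/c)û'`, `c = 6k³DᵤD_v`, and
roots `r₃, r₄` from the coefficient matching, is a classical solution of the
reaction-cross-diffusion system
`u_t = −u(u−1)(u−r₃)(u−r₄) + v* − v + D_v v_xx`, `v_t = −Dᵤ u_xx` on all of ℝ². -/
theorem stmt_16 (k Du Dv vs : ℝ) (hk : 0 < k) (hDu : 0 < Du) (hDv : 0 < Dv)
    (c ρ r₃ r₄ : ℝ)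
    (hc : c = 6 * k ^ 3 * Du * Dv) (hρ : ρ = k * (Du - c ^ 2) / c)
    (hdisc : 0 ≤ 3 + 36 * ρ)
    (hr₃ : r₃ = 1 / 2 - Real.sqrt (3 + 36 * ρ) / 6)
    (hr₄ : r₄ = 1 / 2 + Real.sqrt (3 + 36 * ρ) / 6)
    (uh vh : ℝ → ℝ)
    (huh : ∀ ξ : ℝ, uh ξ = Real.exp (-k * ξ) / (1 + Real.exp (-k * ξ)))
    (hvh : ∀ ξ : ℝ, vh ξ = vs + (Du / c) * deriv uh ξ)
    (u v : ℝ → ℝ → ℝ)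
    (hu : ∀ x t : ℝ, u x t = uh (x - c * t))
    (hv : ∀ x t : ℝ, v x t = vh (x - c * t)) :
    ∀ x t : ℝ,
      deriv (fun s => u x s) t
        = -(u x t) * (u x t - 1) * (u x t - r₃) * (u x t - r₄) + vs - v x t
          + Dv * deriv (deriv (fun y => v y t)) x ∧
      deriv (fun s => v x s) t = -Du * deriv (deriv (fun y => u y t)) x := by
  intro x t
  have hc0 : c ≠ 0 := by rw [hc]; positivity
  have hw : ∀ ξ, HasDerivAt uh (k * uh ξ * (uh ξ - 1)) ξ := by
    have h : uh = fun ξ => sigmoid (-k * ξ) := funext fun ξ => by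
      rw [huh, neg_mul, exp_neg_div_one_add_exp_neg]
    exact h ▸ hasDerivAt_sigmoid_neg_mul k
  have hvh_deriv : deriv vh = fun ξ => Du / c * deriv (deriv uh) ξ := by
    rw [funext hvh, deriv_const_add', deriv_const_mul_field']
  have hvh_deriv2 : deriv (deriv vh) = fun ξ => Du / c * deriv (deriv (deriv uh)) ξ := by
    rw [hvh_deriv, deriv_const_mul_field']
  have hut : deriv (fun s => u x s) t = -c * deriv uh (x - c * t) := by
    simp only [hu, deriv_comp_const_sub_mul]
  have hvt : deriv (fun s => v x s) t = -c * deriv vh (x - c * t) := by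
    simp only [hv, deriv_comp_const_sub_mul]
  have huxx : deriv (deriv fun y => u y t) x = deriv (deriv uh) (x - c * t) := by
    simp only [hu, deriv_deriv_comp_sub_const]
  have hvxx : deriv (deriv fun y => v y t) x = deriv (deriv vh) (x - c * t) := by
    simp only [hv, deriv_deriv_comp_sub_const]
  rw [hut, hvt, huxx, hvxx, hvh_deriv2, hvh_deriv, hv, hvh, hu,
    deriv_deriv_deriv_eq_of_logistic_ode hw, deriv_deriv_eq_of_logistic_ode hw,
    deriv_eq_of_logistic_ode hw]
  beta_reduce
  have hroots := sub_mul_sub_eq_of_sqrt hdisc (uh (x - c * t))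
  rw [← hr₃, ← hr₄] at hroots
  constructor
  · linear_combination front_reaction_balance hc0 hc hρ hroots
  · field_simp
end

section
/- Let k > 0, Dᵤ > 0, D_v > 0, set c = 6k³DᵤD_v and ρ = k(Dᵤ − c²)/c, and let r₃, r₄ be real numbers with r₃ + r₄ = 1 and r₃·r₄ = 1/6 − ρ. Then û(ξ) = e^{−kξ}/(1 + e^{−kξ}) satisfies the third-order ordinary differential equation D_v·Dᵤ·û'''(ξ) + (c² − Dᵤ)·û'(ξ) − c·û(ξ)(û(ξ)−1)(û(ξ)−r₃)(û(ξ)−r₄) = 0 for all ξ ∈ ℝ, together with û(+∞) = 0, û(−∞) = 1. -/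
open Filter Topology

/-!
The profile is the logistic function, which solves the Riccati equation `û' = k û (û - 1)`.
Differentiating that equation expresses `û'''` as `k³ û (û - 1) (6û² - 6û + 1)`, so every term
of the travelling-wave equation is `û (û - 1)` times a quadratic in `û`. The choice
`c = 6k³DᵤD_v` matches the quadratic terms and `cρ = k(Dᵤ - c²)` the constant ones.
-/

namespace TravellingWave

section Riccati

variable {u : ℝ → ℝ} {k : ℝ}

theorem deriv_eq_of_riccati (hu : ∀ x, HasDerivAt u (k * u x * (u x - 1)) x) :
    deriv u = fun x => k * u x * (u x - 1) :=
  funext fun x => (hu x).deriv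

theorem deriv_deriv_eq_of_riccati (hu : ∀ x, HasDerivAt u (k * u x * (u x - 1)) x) :
    deriv (deriv u) = fun x => k ^ 2 * u x * (u x - 1) * (2 * u x - 1) := by
  rw [deriv_eq_of_riccati hu]
  exact funext fun x =>
    (((hu x).const_mul k).mul ((hu x).sub_const 1)).deriv.trans (by ring)

theorem deriv_deriv_deriv_eq_of_riccati (hu : ∀ x, HasDerivAt u (k * u x * (u x - 1)) x) :
    deriv (deriv (deriv u)) = fun x => k ^ 3 * u x * (u x - 1) * (6 * u x ^ 2 - 6 * u x + 1) := by
  rw [deriv_deriv_eq_of_riccati hu]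
  exact funext fun x =>
    ((((hu x).const_mul (k ^ 2)).mul ((hu x).sub_const 1)).mul
      (((hu x).const_mul 2).sub_const 1)).deriv.trans (by simp only [Pi.mul_apply]; ring)

theorem travellingWave_ode_of_riccati {Du Dv c ρ r₃ r₄ : ℝ}
    (hu : ∀ x, HasDerivAt u (k * u x * (u x - 1)) x) (hc : c = 6 * k ^ 3 * Du * Dv)
    (hcρ : c * ρ = k * (Du - c ^ 2)) (hsum : r₃ + r₄ = 1) (hprod : r₃ * r₄ = 1 / 6 - ρ) (ξ : ℝ) :
    Dv * Du * deriv (deriv (deriv u)) ξ + (c ^ 2 - Du) * deriv u ξ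
      - c * (u ξ * (u ξ - 1) * (u ξ - r₃) * (u ξ - r₄)) = 0 := by
  rw [deriv_deriv_deriv_eq_of_riccati hu, deriv_eq_of_riccati hu]
  linear_combination (-(u ξ * (u ξ - 1) * (u ξ ^ 2 - u ξ + 1 / 6))) * hc
    + u ξ * (u ξ - 1) * hcρ + c * u ξ ^ 2 * (u ξ - 1) * hsum - c * u ξ * (u ξ - 1) * hprod

end Riccati

noncomputable def logisticProfile (k ξ : ℝ) : ℝ := Real.exp (-k * ξ) / (1 + Real.exp (-k * ξ))

theorem logisticProfile_eq_inv (k ξ : ℝ) : logisticProfile k ξ = (1 + Real.exp (k * ξ))⁻¹ := by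
  rw [logisticProfile, neg_mul, Real.exp_neg]
  field_simp
  ring

theorem hasDerivAt_logisticProfile (k x : ℝ) :
    HasDerivAt (logisticProfile k) (k * logisticProfile k x * (logisticProfile k x - 1)) x := by
  have hE : HasDerivAt (fun y => Real.exp (-k * y)) (Real.exp (-k * x) * -k) x := by
    simpa using ((hasDerivAt_id x).const_mul (-k)).exp
  have hpos : 0 < 1 + Real.exp (-k * x) := by positivity
  refine (hE.div (hE.const_add 1) hpos.ne').congr_deriv ?_
  simp only [logisticProfile]
  field_simp
  ring

theorem tendsto_logisticProfile_atTop {k : ℝ} (hk : 0 < k) :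
    Tendsto (logisticProfile k) atTop (𝓝 0) := by
  simp only [funext (logisticProfile_eq_inv k)]
  exact tendsto_inv_atTop_zero.comp <| tendsto_atTop_add_const_left _ 1 <|
    Real.tendsto_exp_atTop.comp (tendsto_id.const_mul_atTop hk)

theorem tendsto_logisticProfile_atBot {k : ℝ} (hk : 0 < k) :
    Tendsto (logisticProfile k) atBot (𝓝 1) := by
  simp only [funext (logisticProfile_eq_inv k)]
  simpa using ((Real.tendsto_exp_atBot.comp (tendsto_id.const_mul_atBot hk)).const_add 1).inv₀
    (by norm_num)

end TravellingWave

open TravellingWave in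
/-- The profile `û(ξ) = e^{−kξ}/(1 + e^{−kξ})` satisfies the
third-order travelling-wave ODE
`D_v·Dᵤ·û''' + (c² − Dᵤ)·û' − c·û(û−1)(û−r₃)(û−r₄) = 0` on ℝ, with
`û(+∞) = 0` and `û(−∞) = 1`, where `c = 6k³DᵤD_v`, `ρ = k(Dᵤ − c²)/c`,
`r₃ + r₄ = 1` and `r₃r₄ = 1/6 − ρ`. -/
theorem stmt_17 (k Du Dv : ℝ) (hk : 0 < k) (hDu : 0 < Du) (hDv : 0 < Dv)
    (c ρ r₃ r₄ : ℝ)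
    (hc : c = 6 * k ^ 3 * Du * Dv) (hρ : ρ = k * (Du - c ^ 2) / c)
    (hsum : r₃ + r₄ = 1) (hprod : r₃ * r₄ = 1 / 6 - ρ)
    (uh : ℝ → ℝ)
    (huh : ∀ ξ : ℝ, uh ξ = Real.exp (-k * ξ) / (1 + Real.exp (-k * ξ))) :
    (∀ ξ : ℝ,
      Dv * Du * deriv (deriv (deriv uh)) ξ + (c ^ 2 - Du) * deriv uh ξ
        - c * (uh ξ * (uh ξ - 1) * (uh ξ - r₃) * (uh ξ - r₄)) = 0) ∧
    Tendsto uh atTop (nhds 0) ∧ Tendsto uh atBot (nhds 1) := by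
  have hc0 : c ≠ 0 := by rw [hc]; positivity
  have hcρ : c * ρ = k * (Du - c ^ 2) := by rw [hρ]; field_simp
  obtain rfl : uh = logisticProfile k := funext huh
  exact ⟨travellingWave_ode_of_riccati (hasDerivAt_logisticProfile k) hc hcρ hsum hprod,
    tendsto_logisticProfile_atTop hk, tendsto_logisticProfile_atBot hk⟩
end
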